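/- arXiv:2510.13523 — 2 statements merged into one kernel-verified Lean document; each statement's English description precedes it below -/
import Mathlib

section
/- Let n ≥ 1 and let d ∈ P^sp_B(2n+1) = P_{0,1}(2n+1). Then f_BC(d) := (d⁻)_C belongs to P^sp_C(2n) = P_{1,0}(2n). -/
/-- A partition of `N`: a non-increasing list of positive naturals summing to `N`. -/
def IsPartition (N : ℕ) (l : List ℕ) : Prop :=
  l.Pairwise (· ≥ ·) ∧ (∀ p ∈ l, 0 < p) ∧ l.sum = N

/-- Dominance order on partitions: `Dom p q` means `p ⪯ q`,
i.e. every initial partial sum of `p` is at most that of `q`. -/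
def Dom (p q : List ℕ) : Prop :=
  ∀ j : ℕ, (p.take j).sum ≤ (q.take j).sum

/-- The height `h_d(s) = #{j : d_j ≥ s}`. -/
def height (l : List ℕ) (s : ℕ) : ℕ :=
  (l.filter (fun p => decide (s ≤ p))).length

/-- Membership in `P_ε(N)`: every part congruent to `ε` mod 2 occurs with even multiplicity. -/
def PEps (e : ℕ) (l : List ℕ) : Prop :=
  ∀ s ∈ l, s % 2 = e % 2 → Even (l.count s)

/-- Membership in `P_{ε,ε'}(N)`: lies in `P_ε` and `h_d(s) ≡ ε'  (mod 2)` for every integer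
`s ≥ 0` with `s ≡ ε (mod 2)` which is either `0` or a part of `d`. -/
def PEpsEps (e e' : ℕ) (l : List ℕ) : Prop :=
  PEps e l ∧
    ∀ s : ℕ, s % 2 = e % 2 → (s = 0 ∨ s ∈ l) → height l s % 2 = e' % 2

/-- `d⁺ = [d₁ + 1, d₂, …, d_k]`. -/
def dplus : List ℕ → List ℕ
  | [] => []
  | a :: rest => (a + 1) :: rest

/-- `d⁻ = [d₁, …, d_{k−1}, d_k − 1]`, the last entry removed if `d_k = 1`. -/
def dminus (l : List ℕ) : List ℕ :=
  (l.dropLast ++ [l.getLastD 0 - 1]).filter (fun p => decide (0 < p))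

/-- `IsCollapse e N l c` says that `c` is the collapse of `l` into `P_e`: the greatest
element, in the dominance order, of the set of partitions of `N` lying in `P_e` and
dominated by `l`. -/
def IsCollapse (e N : ℕ) (l c : List ℕ) : Prop :=
  IsPartition N c ∧ PEps e c ∧ Dom c l ∧
    ∀ m : List ℕ, IsPartition N m → PEps e m → Dom m l → Dom m c

/-!
Write `W_l(t) = ∑ᵢ min(lᵢ, t)` (`sumMin l t`), the number of boxes in the first `t` columns of
the Young diagram of `l`; for partitions of the same number, `p ⪯ q` iff `W_q ≤ W_p` pointwise.
In `P_1`, `W(t)` is even for even `t`; for `d ∈ P_0` with an odd number of parts, `W_d(t)` is odd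
for odd `t`. Suppose `e = (d⁻)_C` has an odd part `s` of odd height; then `W_e(s)` is odd. The
collapse is tight at its odd parts, `W_e(s) = W_{d⁻}(s)`, since otherwise splitting two rows
`s, s` of `e` into `s + 1, s - 1` would give a strictly larger element of `P_1` below `d⁻`.
Comparing parities, every part of `d` exceeds `s`, so `W_{d⁻}` has slope `#d` up to `s`; but the
column heights of `e` strictly drop at its part `s`, which together with the parity of
`W_e(s + 1)` contradicts `W_{d⁻} ≤ W_e`.
-/

def sumMin (l : List ℕ) (t : ℕ) : ℕ := (l.map (min · t)).sum

section SumMin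

@[simp] lemma sumMin_nil (t : ℕ) : sumMin [] t = 0 := rfl

@[simp] lemma sumMin_cons (a : ℕ) (l : List ℕ) (t : ℕ) :
    sumMin (a :: l) t = min a t + sumMin l t := by
  simp [sumMin]

@[simp] lemma sumMin_append (l₁ l₂ : List ℕ) (t : ℕ) :
    sumMin (l₁ ++ l₂) t = sumMin l₁ t + sumMin l₂ t := by
  simp [sumMin]

lemma List.Perm.sumMin_eq {l₁ l₂ : List ℕ} (h : l₁.Perm l₂) (t : ℕ) :
    sumMin l₁ t = sumMin l₂ t :=
  (h.map _).sum_eq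

lemma sumMin_filter_pos (l : List ℕ) (t : ℕ) : sumMin (l.filter (0 < ·)) t = sumMin l t := by
  induction l with
  | nil => rfl
  | cons a l ih => rcases a with _ | a <;> simp [ih]

lemma sum_filter_pos (l : List ℕ) : (l.filter (0 < ·)).sum = l.sum := by
  induction l with
  | nil => rfl
  | cons a l ih => rcases a with _ | a <;> simp [ih]

lemma sumMin_le_sum (l : List ℕ) (t : ℕ) : sumMin l t ≤ l.sum := by
  simpa [sumMin] using
    List.sum_le_sum (l := l) (f := (min · t)) (g := id) fun x _ => min_le_left x t

lemma sumMin_eq_sum {l : List ℕ} {t : ℕ} (h : ∀ x ∈ l, x ≤ t) : sumMin l t = l.sum := by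
  have : l.map (min · t) = l.map id := List.map_congr_left fun x hx => min_eq_left (h x hx)
  rw [sumMin, this, List.map_id]

lemma sumMin_eq_length_mul {l : List ℕ} {t : ℕ} (h : ∀ x ∈ l, t ≤ x) :
    sumMin l t = l.length * t := by
  have : l.map (min · t) = l.map fun _ => t := List.map_congr_left fun x hx => min_eq_right (h x hx)
  simp [sumMin, this]

lemma height_cons (a : ℕ) (l : List ℕ) (s : ℕ) :
    height (a :: l) s = height l s + if s ≤ a then 1 else 0 := by
  by_cases h : s ≤ a <;> simp [height, h]

lemma height_zero (l : List ℕ) : height l 0 = l.length := by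
  simp [height]

lemma height_eq_count_add_height_succ (l : List ℕ) (t : ℕ) :
    height l t = l.count t + height l (t + 1) := by
  induction l with
  | nil => rfl
  | cons a l ih =>
    rw [height_cons, height_cons, List.count_cons, ih]
    by_cases h₁ : t ≤ a <;> by_cases h₂ : t + 1 ≤ a <;> by_cases h₃ : a = t <;>
      simp [h₁, h₂, h₃] <;> omega

lemma sumMin_succ (l : List ℕ) (t : ℕ) : sumMin l (t + 1) = sumMin l t + height l (t + 1) := by
  induction l with
  | nil => rfl
  | cons a l ih =>
    rw [sumMin_cons, sumMin_cons, height_cons, ih]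
    split_ifs <;> omega

end SumMin

section Dominance

lemma sum_take_add_sumMin_le (l : List ℕ) (j t : ℕ) :
    (l.take j).sum + sumMin l t ≤ j * t + l.sum := by
  induction l generalizing j with
  | nil => simp
  | cons a l ih =>
    cases j with
    | zero => simpa using sumMin_le_sum (a :: l) t
    | succ j =>
      have := ih j
      have := min_le_right a t
      simp only [List.take_succ_cons, List.sum_cons, sumMin_cons, Nat.succ_mul]
      omega

lemma exists_index_sum_take_add_sumMin_eq {l : List ℕ} (hl : l.Pairwise (· ≥ ·)) (t : ℕ) :
    ∃ j, (l.take j).sum + sumMin l t = j * t + l.sum := by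
  induction l with
  | nil => exact ⟨0, by simp⟩
  | cons a l ih =>
    rw [List.pairwise_cons] at hl
    by_cases hat : a ≤ t
    · refine ⟨0, ?_⟩
      rw [sumMin_eq_sum]
      · simp
      · simpa using ⟨hat, fun x hx => (hl.1 x hx).trans hat⟩
    · obtain ⟨j, hj⟩ := ih hl.2
      refine ⟨j + 1, ?_⟩
      simp only [List.take_succ_cons, List.sum_cons, sumMin_cons, Nat.succ_mul]
      omega

lemma exists_threshold_sum_take_add_sumMin_eq {l : List ℕ} (hl : l.Pairwise (· ≥ ·)) (j : ℕ) :
    ∃ t ≤ l.headD 0, (l.take j).sum + sumMin l t = j * t + l.sum := by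
  induction l generalizing j with
  | nil => exact ⟨0, le_rfl, by simp⟩
  | cons a l ih =>
    rw [List.pairwise_cons] at hl
    cases j with
    | zero =>
      refine ⟨a, le_rfl, ?_⟩
      rw [sumMin_eq_sum]
      · simp
      · simpa using hl.1
    | succ j =>
      obtain ⟨t, ht, hj⟩ := ih hl.2 j
      have hta : t ≤ a := by
        cases l with
        | nil => simp at ht; omega
        | cons b l => exact ht.trans (hl.1 b (by simp))
      refine ⟨t, hta, ?_⟩
      simp only [List.take_succ_cons, List.sum_cons, sumMin_cons, min_eq_right hta, Nat.succ_mul]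
      omega

lemma sumMin_le_of_dom {p q : List ℕ} (hp : p.Pairwise (· ≥ ·)) (hsum : p.sum = q.sum)
    (h : Dom p q) (t : ℕ) : sumMin q t ≤ sumMin p t := by
  obtain ⟨j, hj⟩ := exists_index_sum_take_add_sumMin_eq hp t
  have := sum_take_add_sumMin_le q j t
  have := h j
  omega

lemma dom_of_sumMin_le {p q : List ℕ} (hq : q.Pairwise (· ≥ ·)) (hsum : p.sum = q.sum)
    (h : ∀ t, sumMin q t ≤ sumMin p t) : Dom p q := by
  intro j
  obtain ⟨t, -, ht⟩ := exists_threshold_sum_take_add_sumMin_eq hq j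
  have := sum_take_add_sumMin_le p j t
  have := h t
  omega

end Dominance

section Parity

lemma PEps.even_count {e : ℕ} {l : List ℕ} (h : PEps e l) {v : ℕ} (hv : v % 2 = e % 2) :
    Even (l.count v) := by
  by_cases hmem : v ∈ l
  · exact h v hmem hv
  · simp [List.count_eq_zero_of_not_mem hmem]

lemma even_sum_map_of_even_count_or_even {l : List ℕ} {f : ℕ → ℕ}
    (h : ∀ a ∈ l, Even (l.count a) ∨ Even (f a)) : Even (l.map f).sum := by
  rw [Finset.sum_list_map_count]
  refine Finset.even_sum _ fun a ha => ?_
  rcases h a (List.mem_toFinset.mp ha) with h | h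
  · exact h.mul_right _
  · exact h.mul_left _

lemma even_sumMin_of_pEps_one {l : List ℕ} (h : PEps 1 l) {t : ℕ} (ht : Even t) :
    Even (sumMin l t) :=
  even_sum_map_of_even_count_or_even fun a _ => by
    rcases Nat.even_or_odd a with ha | ha
    · exact Or.inr (by rcases min_choice a t with hm | hm <;> rw [hm] <;> assumption)
    · exact Or.inl (h.even_count (Nat.odd_iff.mp ha))

lemma odd_sumMin_of_pEps_zero {l : List ℕ} (h : PEps 0 l) (hl : Odd l.length) {t : ℕ}
    (ht : Odd t) : Odd (sumMin l t) := by
  have hsum : Even (sumMin l t + l.length) := by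
    have := even_sum_map_of_even_count_or_even (l := l) (f := fun a => min a t + 1) fun a _ => by
      rcases Nat.even_or_odd a with ha | ha
      · exact Or.inl (h.even_count (Nat.even_iff.mp ha))
      · refine Or.inr ?_
        rcases min_choice a t with hm | hm <;> rw [hm] <;> simpa [Nat.even_add_one]
    simpa [sumMin, List.sum_map_add] using this
  rw [Nat.even_add] at hsum
  rw [← Nat.not_even_iff_odd] at hl ⊢
  exact fun h => hl (hsum.mp h)

lemma odd_sumMin_of_pEps_one {l : List ℕ} (h : PEps 1 l) {s : ℕ} (hs : Odd s)
    (hheight : Odd (height l s)) : Odd (sumMin l s) := by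
  obtain ⟨u, rfl⟩ := hs
  rw [sumMin_succ]
  exact (even_sumMin_of_pEps_one h (even_two_mul u)).add_odd hheight

end Parity

lemma exists_isPartition_count_sumMin_eq (l : List ℕ) :
    ∃ m, IsPartition l.sum m ∧ (∀ v, 0 < v → m.count v = l.count v) ∧
      ∀ t, sumMin m t = sumMin l t := by
  have hperm := List.mergeSort_perm (l.filter (0 < ·)) fun a b => decide (b ≤ a)
  refine ⟨(l.filter (0 < ·)).mergeSort fun a b => decide (b ≤ a), ⟨?_, fun x hx => ?_, ?_⟩,
    fun v hv => ?_, fun t => ?_⟩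
  · simpa using List.pairwise_mergeSort (le := fun a b => decide (b ≤ a))
      (by simp only [decide_eq_true_eq]; omega)
      (by simp only [Bool.or_eq_true, decide_eq_true_eq]; omega) _
  · exact (List.mem_filter.mp (hperm.subset hx)).2 |> of_decide_eq_true
  · rw [hperm.sum_eq, sum_filter_pos]
  · rw [hperm.count_eq, List.count_filter (by simpa using hv)]
  · rw [hperm.sumMin_eq, sumMin_filter_pos]

lemma perm_cons_cons_erase_erase {α : Type*} [DecidableEq α] {l : List α} {a : α}
    (h : 2 ≤ l.count a) : l.Perm (a :: a :: (l.erase a).erase a) := by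
  have h₁ : a ∈ l := List.count_pos_iff.mp (by omega)
  have h₂ : a ∈ l.erase a := List.count_pos_iff.mp (by rw [List.count_erase]; simp; omega)
  exact (List.perm_cons_erase h₁).trans ((List.perm_cons_erase h₂).cons a)

lemma exists_isPartition_pEps_one_sumMin_add_ite {N s : ℕ} {c : List ℕ} (hc : IsPartition N c)
    (hP : PEps 1 c) (hs : Odd s) (hmem : s ∈ c) :
    ∃ m, IsPartition N m ∧ PEps 1 m ∧ ∀ t, sumMin m t + (if t = s then 1 else 0) = sumMin c t := by
  have hs2 : s % 2 = 1 := Nat.odd_iff.mp hs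
  have hcount : 2 ≤ c.count s := by
    obtain ⟨r, hr⟩ := hP s hmem hs2
    have := List.count_pos_iff.mpr hmem
    omega
  have hperm := perm_cons_cons_erase_erase hcount
  obtain ⟨m, ⟨hsort, hpos, hsum⟩, hcount_m, hsumMin⟩ :=
    exists_isPartition_count_sumMin_eq ((s + 1) :: (s - 1) :: (c.erase s).erase s)
  refine ⟨m, ⟨hsort, hpos, ?_⟩, fun v hv hvodd => ?_, fun t => ?_⟩
  · rw [hsum, ← hc.2.2, hperm.sum_eq]
    simp only [List.sum_cons]
    omega
  · have hc_even := hP.even_count hvodd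
    rw [hperm.count_eq] at hc_even
    rw [hcount_m v (hpos v hv)]
    simp only [List.count_cons, beq_iff_eq] at hc_even ⊢
    rw [if_neg (by omega), if_neg (by omega)]
    by_cases hvs : s = v
    · simpa [hvs, Nat.even_add_one] using hc_even
    · simpa [hvs] using hc_even
  · rw [hsumMin, hperm.sumMin_eq]
    simp only [sumMin_cons]
    split_ifs <;> omega

lemma IsCollapse.sumMin_eq_of_odd_mem {N : ℕ} {l c : List ℕ} (hc : IsCollapse 1 N l c)
    (hl : l.Pairwise (· ≥ ·)) (hsum : l.sum = N) {s : ℕ} (hs : Odd s) (hmem : s ∈ c) :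
    sumMin c s = sumMin l s := by
  obtain ⟨hpart, hP, hdom, hmax⟩ := hc
  have hle : ∀ t, sumMin l t ≤ sumMin c t :=
    sumMin_le_of_dom hpart.1 (hpart.2.2.trans hsum.symm) hdom
  refine le_antisymm (not_lt.mp fun hlt => ?_) (hle s)
  obtain ⟨m, hm, hmP, hmc⟩ := exists_isPartition_pEps_one_sumMin_add_ite hpart hP hs hmem
  have hml : Dom m l := dom_of_sumMin_le hl (hm.2.2.trans hsum.symm) fun t => by
    have hmct := hmc t
    rcases eq_or_ne t s with rfl | hts
    · simp only [if_true] at hmct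
      omega
    · simp only [hts, if_false] at hmct
      exact (hle t).trans_eq hmct.symm
  have := sumMin_le_of_dom hm.1 (hm.2.2.trans hpart.2.2.symm) (hmax m hm hmP hml) s
  have := hmc s
  simp only [if_true] at this
  omega

lemma mul_lt_sumMin_of_odd_mem {c : List ℕ} (hP : PEps 1 c) {s k : ℕ} (hs : Odd s) (hmem : s ∈ c)
    (hbelow : k * (s - 1) ≤ sumMin c (s - 1)) (habove : k * (s + 1) ≤ sumMin c (s + 1) + 1) :
    k * s < sumMin c s := by
  obtain ⟨u, rfl⟩ := hs
  have hcount : 0 < c.count (2 * u + 1) := List.count_pos_iff.mpr hmem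
  have hsplit := height_eq_count_add_height_succ c (2 * u + 1)
  have hW₁ := sumMin_succ c (2 * u)
  have hW₂ := sumMin_succ c (2 * u + 1)
  obtain ⟨r, hr⟩ := even_sumMin_of_pEps_one hP (t := 2 * u + 1 + 1) ⟨u + 1, by ring⟩
  have e₀ : k * (2 * u) = 2 * (k * u) := by ring
  have e₁ : k * (2 * u + 1) = 2 * (k * u) + k := by ring
  have e₂ : k * (2 * u + 1 + 1) = 2 * (k * u) + 2 * k := by ring
  simp only [Nat.add_sub_cancel] at hbelow
  omega

lemma dropLast_append_getLastD {α : Type*} {l : List α} (h : l ≠ []) (a : α) :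
    l.dropLast ++ [l.getLastD a] = l := by
  rw [List.getLastD_eq_getLast?, List.getLast?_eq_some_getLast h]
  exact List.dropLast_append_getLast h

lemma getLastD_mem {α : Type*} {l : List α} (h : l ≠ []) (a : α) : l.getLastD a ∈ l := by
  rw [List.getLastD_eq_getLast?, List.getLast?_eq_some_getLast h]
  exact List.getLast_mem h

lemma getLastD_le_of_mem {α : Type*} [Preorder α] {l : List α} (hl : l.Pairwise (· ≥ ·))
    (h : l ≠ []) (a : α) {x : α} (hx : x ∈ l) : l.getLastD a ≤ x := by
  rw [← dropLast_append_getLastD h a] at hx hl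
  rcases List.mem_append.mp hx with hx | hx
  · exact (List.pairwise_append.mp hl).2.2 x hx _ (List.mem_singleton_self _)
  · exact (List.mem_singleton.mp hx).ge

lemma pairwise_dminus {d : List ℕ} (hd : d.Pairwise (· ≥ ·)) : (dminus d).Pairwise (· ≥ ·) := by
  rcases eq_or_ne d [] with rfl | hne
  · simp [dminus]
  refine List.Pairwise.sublist List.filter_sublist (List.pairwise_append.mpr
    ⟨hd.sublist (List.dropLast_sublist d), by simp, fun x hx y hy => ?_⟩)
  rw [List.mem_singleton.mp hy]
  exact (getLastD_le_of_mem hd hne 0 (List.dropLast_sublist d |>.subset hx)).trans' (Nat.sub_le _ _)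

lemma sum_dminus_add_one {d : List ℕ} (h : d ≠ []) (hpos : 0 < d.getLastD 0) :
    (dminus d).sum + 1 = d.sum := by
  conv_rhs => rw [← dropLast_append_getLastD h 0]
  simp only [dminus, sum_filter_pos, List.sum_append, List.sum_singleton]
  omega

lemma sumMin_dminus_add_ite {d : List ℕ} (h : d ≠ []) (hpos : 0 < d.getLastD 0) (t : ℕ) :
    sumMin (dminus d) t + (if d.getLastD 0 ≤ t then 1 else 0) = sumMin d t := by
  conv_rhs => rw [← dropLast_append_getLastD h 0]
  simp only [dminus, sumMin_filter_pos, sumMin_append, sumMin_cons, sumMin_nil]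
  split_ifs <;> omega

lemma sumMin_dminus_add_ite_eq_length_mul {d : List ℕ} (hd : d.Pairwise (· ≥ ·)) (h : d ≠ [])
    (hpos : 0 < d.getLastD 0) {t : ℕ} (ht : t ≤ d.getLastD 0) :
    sumMin (dminus d) t + (if d.getLastD 0 = t then 1 else 0) = d.length * t := by
  have := sumMin_dminus_add_ite h hpos t
  rw [sumMin_eq_length_mul fun x hx => ht.trans (getLastD_le_of_mem hd h 0 hx)] at this
  split_ifs at * <;> omega

theorem fBC_mem_general (n : ℕ) (d : List ℕ)
    (hd : IsPartition (2 * n + 1) d) (hdB : PEpsEps 0 1 d)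
    (e : List ℕ) (he : IsCollapse 1 (2 * n) (dminus d) e) :
    PEpsEps 1 0 e := by
  obtain ⟨hsort, hpos, hsum⟩ := hd
  have hne : d ≠ [] := by rintro rfl; simp at hsum
  have hlast : 0 < d.getLastD 0 := hpos _ (getLastD_mem hne 0)
  have hlen : Odd d.length := Nat.odd_iff.mpr (by simpa [height_zero] using hdB.2 0 rfl (.inl rfl))
  have hminus_sum : (dminus d).sum = 2 * n := by have := sum_dminus_add_one hne hlast; omega
  have hle : ∀ t, sumMin (dminus d) t ≤ sumMin e t :=
    sumMin_le_of_dom he.1.1 (he.1.2.2.trans hminus_sum.symm) he.2.2.1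
  refine ⟨he.2.1, fun s hs_mod hs₀ => ?_⟩
  have hs : Odd s := Nat.odd_iff.mpr hs_mod
  have hmem : s ∈ e := hs₀.resolve_left (by rintro rfl; simp at hs)
  by_contra hheight
  have hWe := odd_sumMin_of_pEps_one he.2.1 hs (Nat.odd_iff.mpr (by omega))
  have hWd := odd_sumMin_of_pEps_zero hdB.1 hlen hs
  have htight := he.sumMin_eq_of_odd_mem (pairwise_dminus hsort) hminus_sum hs hmem
  -- otherwise `W_{d⁻}(s) = W_d(s) - 1` would be even
  have hlt : s < d.getLastD 0 := by
    by_contra hge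
    have := sumMin_dminus_add_ite hne hlast s
    rw [if_pos (by omega), ← htight] at this
    rw [Nat.odd_iff] at hWe hWd
    omega
  have hline (t : ℕ) (ht : t ≤ s + 1) :=
    sumMin_dminus_add_ite_eq_length_mul hsort hne hlast (ht.trans hlt)
  refine (mul_lt_sumMin_of_odd_mem he.2.1 hs hmem (k := d.length) ?_ ?_).ne' ?_
  · have := hline (s - 1) (by omega); have := hle (s - 1); split_ifs at * <;> omega
  · have := hline (s + 1) le_rfl; have := hle (s + 1); split_ifs at * <;> omega
  · have := hline s (by omega); split_ifs at * <;> omega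

/-- If `d ∈ P^sp_B(2n+1) = P_{0,1}(2n+1)` then `f_BC(d) = (d⁻)_C` lies in
`P^sp_C(2n) = P_{1,0}(2n)`. -/
theorem fBC_mem (n : ℕ) (hn : 1 ≤ n) (d : List ℕ)
    (hd : IsPartition (2 * n + 1) d) (hdB : PEpsEps 0 1 d)
    (e : List ℕ) (he : IsCollapse 1 (2 * n) (dminus d) e) :
    PEpsEps 1 0 e :=
  fBC_mem_general n d hd hdB e he
end

section
/- The map f_CB : P^sp_C(2n) → P^sp_B(2n+1), d ↦ (d⁺)_B, is order-preserving: if d, d' ∈ P^sp_C(2n) satisfy d ⪯ d' in the dominance order, then f_CB(d) ⪯ f_CB(d'). -/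
/-!
Raising the first part by one raises every nonempty prefix sum by one, so `d ↦ d⁺` preserves
dominance. Then `(d⁺)_B ⪯ d⁺ ⪯ d'⁺`, and `(d'⁺)_B` is the greatest element of `P_0` below `d'⁺`.
-/

theorem Dom.trans {p q r : List ℕ} (hpq : Dom p q) (hqr : Dom q r) : Dom p r :=
  fun j => (hpq j).trans (hqr j)

theorem IsCollapse.dom_of_dom {e N : ℕ} {l l' c c' : List ℕ} (hc : IsCollapse e N l c)
    (hc' : IsCollapse e N l' c') (hl : Dom l l') : Dom c c' :=
  hc'.2.2.2 c hc.1 hc.2.1 (hc.2.2.1.trans hl)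

theorem Dom.ne_nil {p q : List ℕ} (h : Dom p q) (hp : ∀ x ∈ p, 0 < x) (hne : p ≠ []) :
    q ≠ [] := by
  rintro rfl
  obtain ⟨a, r, rfl⟩ := List.exists_cons_of_ne_nil hne
  have := h 1
  simp only [List.take_succ_cons, List.take_zero, List.sum_cons, List.sum_nil,
    List.take_nil] at this
  exact (hp a List.mem_cons_self).ne' (by omega)

theorem sum_take_dplus {l : List ℕ} (hl : l ≠ []) {j : ℕ} (hj : 0 < j) :
    ((dplus l).take j).sum = (l.take j).sum + 1 := by
  obtain ⟨a, r, rfl⟩ := List.exists_cons_of_ne_nil hl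
  obtain ⟨m, rfl⟩ := Nat.exists_eq_add_one_of_ne_zero hj.ne'
  simp only [dplus, List.take_succ_cons, List.sum_cons]
  omega

theorem Dom.dplus {p q : List ℕ} (h : Dom p q) (hpq : p ≠ [] → q ≠ []) :
    Dom (dplus p) (dplus q) := by
  intro j
  rcases j.eq_zero_or_pos with rfl | hj
  · simp
  rcases eq_or_ne p [] with rfl | hp
  · simp [_root_.dplus]
  rw [sum_take_dplus hp hj, sum_take_dplus (hpq hp) hj]
  exact Nat.add_le_add_right (h j) 1

theorem fCB_monotone_general (n : ℕ) (d d' : List ℕ)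
    (hd : IsPartition (2 * n) d)
    (hdom : Dom d d')
    (e e' : List ℕ)
    (he : IsCollapse 0 (2 * n + 1) (dplus d) e)
    (he' : IsCollapse 0 (2 * n + 1) (dplus d') e') :
    Dom e e' :=
  he.dom_of_dom he' (hdom.dplus (hdom.ne_nil hd.2.1))

/-- The map `f_CB : P^sp_C(2n) → P^sp_B(2n+1)`, `d ↦ (d⁺)_B`, is order-preserving for the
dominance order. -/
theorem fCB_monotone (n : ℕ) (d d' : List ℕ)
    (hd : IsPartition (2 * n) d) (hd' : IsPartition (2 * n) d')
    (hdC : PEpsEps 1 0 d) (hd'C : PEpsEps 1 0 d')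
    (hdom : Dom d d')
    (e e' : List ℕ)
    (he : IsCollapse 0 (2 * n + 1) (dplus d) e)
    (he' : IsCollapse 0 (2 * n + 1) (dplus d') e') :
    Dom e e' :=
  fCB_monotone_general n d d' hd hdom e e' he he'
end
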